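/- Assume (i) the performance-difference bound |J(π**) − J(π_θ)| ≤ (2 R_max / (1−γ)^2) · E_{s∼d, g∼ν}[D_TV(π**(·|s,g), π_θ(·|s,g))] holds; (ii) d is absolutely continuous with respect to κ and its Radon–Nikodym derivative dd/dκ is κ-essentially bounded by a constant C ≥ 0; (iii) π** is φ-common in Π, i.e. E_{s∼κ, i∼Π, g∼ν}[D_TV(π**(·|s,g), π_{D,i}(·|s,g))] ≤ φ; and (iv) the map (s,g) ↦ D_TV(π**(·|s,g), π_θ(·|s,g)) and the maps (s,i,g) ↦ D_TV(π**(·|s,g), π_{D,i}(·|s,g)) and (s,i,g) ↦ D_TV(π_{D,i}(·|s,g), π_θ(·|s,g)) are measurable. Then, setting λ_L = (2 R_max / (1−γ)^2) · C, one has |J(π**) − J(π_θ)| ≤ λ_L · φ + λ_L · E_{s∼κ, i∼Π, g∼ν}[D_TV(π_{D,i}(·|s,g), π_θ(·|s,g))]. -/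

import Mathlib

/-! The density bound gives `d ≤ C • κ`, hence `d ⊗ ν ≤ C • (κ ⊗ ν)`, so the expected TV distance
between `π**` and `π_θ` under `d` is at most `C` times its value under `κ`. Averaging additionally
over the index `i ∼ Π` leaves that value unchanged, and the triangle inequality for `D_TV` through
`π_{D,i}` splits it into the `φ`-commonness term and the imitation term. -/

open MeasureTheory

/-- Total variation distance between two measures:
`D_TV(P,Q) = sup over measurable sets A of |P(A) − Q(A)|`. -/
noncomputable def tvDist {T : Type*} [MeasurableSpace T] (P Q : Measure T) : ℝ :=
  ⨆ A : {A : Set T // MeasurableSet A}, |(P A.1).toReal - (Q A.1).toReal|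

open scoped ENNReal

section

variable {α β γ T : Type*} [MeasurableSpace α] [MeasurableSpace β] [MeasurableSpace γ]
  [MeasurableSpace T]

section tvDist

lemma abs_toReal_sub_le_max (P Q : Measure T) [IsFiniteMeasure P] [IsFiniteMeasure Q]
    (A : Set T) : |(P A).toReal - (Q A).toReal| ≤ max (P Set.univ).toReal (Q Set.univ).toReal :=
  abs_sub_le_of_nonneg_of_le ENNReal.toReal_nonneg
    ((ENNReal.toReal_mono (measure_ne_top P _) (measure_mono (Set.subset_univ A))).trans
      (le_max_left _ _))
    ENNReal.toReal_nonneg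
    ((ENNReal.toReal_mono (measure_ne_top Q _) (measure_mono (Set.subset_univ A))).trans
      (le_max_right _ _))

lemma tvDist_bddAbove (P Q : Measure T) [IsFiniteMeasure P] [IsFiniteMeasure Q] :
    BddAbove (Set.range fun A : {A : Set T // MeasurableSet A} =>
      |(P A.1).toReal - (Q A.1).toReal|) :=
  ⟨_, Set.forall_mem_range.2 fun A => abs_toReal_sub_le_max P Q A.1⟩

lemma tvDist_nonneg (P Q : Measure T) : 0 ≤ tvDist P Q :=
  Real.iSup_nonneg fun _ => abs_nonneg _

lemma tvDist_le_one (P Q : Measure T) [IsProbabilityMeasure P] [IsProbabilityMeasure Q] :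
    tvDist P Q ≤ 1 :=
  ciSup_le fun A => by simpa using abs_toReal_sub_le_max P Q A.1

lemma tvDist_triangle (P Q R : Measure T) [IsFiniteMeasure P] [IsFiniteMeasure Q]
    [IsFiniteMeasure R] : tvDist P R ≤ tvDist P Q + tvDist Q R :=
  ciSup_le fun A => (abs_sub_le _ _ _).trans <|
    add_le_add (le_ciSup (tvDist_bddAbove P Q) A) (le_ciSup (tvDist_bddAbove Q R) A)

variable {μ : Measure α} [IsFiniteMeasure μ] {P Q R : α → Measure T}
  [∀ x, IsProbabilityMeasure (P x)] [∀ x, IsProbabilityMeasure (Q x)]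

lemma integrable_tvDist (hm : AEStronglyMeasurable (fun x => tvDist (P x) (Q x)) μ) :
    Integrable (fun x => tvDist (P x) (Q x)) μ :=
  .of_bound hm 1 <| .of_forall fun x => by
    rw [Real.norm_of_nonneg (tvDist_nonneg _ _)]
    exact tvDist_le_one _ _

lemma integral_tvDist_le_add [∀ x, IsProbabilityMeasure (R x)]
    (hPQ : AEStronglyMeasurable (fun x => tvDist (P x) (Q x)) μ)
    (hQR : AEStronglyMeasurable (fun x => tvDist (Q x) (R x)) μ) :
    ∫ x, tvDist (P x) (R x) ∂μ ≤ ∫ x, tvDist (P x) (Q x) ∂μ + ∫ x, tvDist (Q x) (R x) ∂μ := by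
  rw [← integral_add (integrable_tvDist hPQ) (integrable_tvDist hQR)]
  exact integral_mono_of_nonneg (.of_forall fun _ => tvDist_nonneg _ _)
    ((integrable_tvDist hPQ).add (integrable_tvDist hQR)) (.of_forall fun _ => tvDist_triangle _ _ _)

end tvDist

namespace MeasureTheory.Measure

lemma le_smul_of_rnDeriv_le {μ ν : Measure α} [HaveLebesgueDecomposition μ ν] (hμν : μ ≪ ν)
    {c : ℝ≥0∞} (h : ∀ᵐ x ∂ν, μ.rnDeriv ν x ≤ c) : μ ≤ c • ν := by
  calc μ = ν.withDensity (μ.rnDeriv ν) := (withDensity_rnDeriv_eq μ ν hμν).symm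
    _ ≤ ν.withDensity fun _ => c := withDensity_mono h
    _ = c • ν := withDensity_const c

lemma map_prodMap_id_snd_prod (μ : Measure α) (ξ : Measure β) (ν : Measure γ) [SFinite μ]
    [IsProbabilityMeasure ξ] [SFinite ν] :
    (μ.prod (ξ.prod ν)).map (Prod.map id Prod.snd) = μ.prod ν := by
  rw [← map_prod_map μ (ξ.prod ν) measurable_id measurable_snd, map_id, map_snd_prod,
    measure_univ, one_smul]

end MeasureTheory.Measure

lemma integral_comp_prodMap_id_snd {E : Type*} [NormedAddCommGroup E] [NormedSpace ℝ E]
    (μ : Measure α) (ξ : Measure β) (ν : Measure γ) [SFinite μ] [IsProbabilityMeasure ξ]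
    [SFinite ν] {f : α × γ → E} (hf : AEStronglyMeasurable f (μ.prod ν)) :
    ∫ p : α × β × γ, f (p.1, p.2.2) ∂(μ.prod (ξ.prod ν)) = ∫ p, f p ∂(μ.prod ν) := by
  rw [← Measure.map_prodMap_id_snd_prod μ ξ ν] at hf ⊢
  exact (integral_map (measurable_id.prodMap measurable_snd).aemeasurable hf).symm

lemma integral_le_mul_integral_of_le_smul {μ μ' : Measure α} {c : ℝ} (hc : 0 ≤ c)
    (hle : μ ≤ ENNReal.ofReal c • μ') {f : α → ℝ} (hf : 0 ≤ᵐ[μ'] f) (hfi : Integrable f μ') :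
    ∫ x, f x ∂μ ≤ c * ∫ x, f x ∂μ' := by
  calc ∫ x, f x ∂μ ≤ ∫ x, f x ∂(ENNReal.ofReal c • μ') :=
        integral_mono_measure hle (Measure.ae_smul_measure hf _)
          (hfi.smul_measure ENNReal.ofReal_ne_top)
    _ = c * ∫ x, f x ∂μ' := by rw [integral_smul_measure, ENNReal.toReal_ofReal hc, smul_eq_mul]

end

theorem lower_level_suboptimality_bound_general
    {S T G I : Type*} [MeasurableSpace S] [MeasurableSpace T] [MeasurableSpace G]
    [MeasurableSpace I]
    (κ d : Measure S) (ν : Measure G) (μI : Measure I)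
    [IsProbabilityMeasure κ] [IsProbabilityMeasure d] [IsProbabilityMeasure ν]
    [IsProbabilityMeasure μI]
    (πD : I → S → G → Measure T) (πStarStar πθ : S → G → Measure T)
    (hπD : ∀ i s g, IsProbabilityMeasure (πD i s g))
    (hπStarStar : ∀ s g, IsProbabilityMeasure (πStarStar s g))
    (hπθ : ∀ s g, IsProbabilityMeasure (πθ s g))
    (J : (S → G → Measure T) → ℝ)
    (Rmax γ φ C : ℝ)
    (hR : 0 ≤ Rmax)
    (hC : 0 ≤ C)
    -- (i) performance-difference bound
    (hperf : |J πStarStar - J πθ| ≤ (2 * Rmax / (1 - γ) ^ 2) *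
      ∫ p : S × G, tvDist (πStarStar p.1 p.2) (πθ p.1 p.2) ∂(d.prod ν))
    -- (ii) absolute continuity of `d` w.r.t. `κ` with κ-essentially bounded density
    (hac : d ≪ κ)
    (hbound : ∀ᵐ s ∂κ, d.rnDeriv κ s ≤ ENNReal.ofReal C)
    -- (iii) `π**` is `φ`-common in `Π`
    (hcommon : ∫ p : S × I × G,
        tvDist (πStarStar p.1 p.2.2) (πD p.2.1 p.1 p.2.2) ∂(κ.prod (μI.prod ν)) ≤ φ)
    -- (iv) measurability of the total-variation maps
    (hm1 : Measurable fun p : S × G => tvDist (πStarStar p.1 p.2) (πθ p.1 p.2))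
    (hm2 : Measurable fun p : S × I × G =>
      tvDist (πStarStar p.1 p.2.2) (πD p.2.1 p.1 p.2.2))
    (hm3 : Measurable fun p : S × I × G => tvDist (πD p.2.1 p.1 p.2.2) (πθ p.1 p.2.2)) :
    |J πStarStar - J πθ| ≤ (2 * Rmax / (1 - γ) ^ 2) * C * φ +
      (2 * Rmax / (1 - γ) ^ 2) * C *
        ∫ p : S × I × G,
          tvDist (πD p.2.1 p.1 p.2.2) (πθ p.1 p.2.2) ∂(κ.prod (μI.prod ν)) := by
  have := hπD; have := hπStarStar; have := hπθ
  have hdν : d.prod ν ≤ ENNReal.ofReal C • κ.prod ν := by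
    rw [← Measure.prod_smul_left]
    exact Measure.prod_mono (Measure.le_smul_of_rnDeriv_le hac hbound) le_rfl
  calc |J πStarStar - J πθ|
      ≤ (2 * Rmax / (1 - γ) ^ 2) *
          ∫ p : S × G, tvDist (πStarStar p.1 p.2) (πθ p.1 p.2) ∂(d.prod ν) := hperf
    _ ≤ (2 * Rmax / (1 - γ) ^ 2) * (C *
          ∫ p : S × G, tvDist (πStarStar p.1 p.2) (πθ p.1 p.2) ∂(κ.prod ν)) := by
        gcongr
        exact integral_le_mul_integral_of_le_smul hC hdν (.of_forall fun _ => tvDist_nonneg _ _)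
          (integrable_tvDist hm1.aestronglyMeasurable)
    _ = (2 * Rmax / (1 - γ) ^ 2) * (C * ∫ p : S × I × G,
          tvDist (πStarStar p.1 p.2.2) (πθ p.1 p.2.2) ∂(κ.prod (μI.prod ν))) := by
        rw [integral_comp_prodMap_id_snd κ μI ν hm1.aestronglyMeasurable]
    _ ≤ (2 * Rmax / (1 - γ) ^ 2) * (C * (φ + ∫ p : S × I × G,
          tvDist (πD p.2.1 p.1 p.2.2) (πθ p.1 p.2.2) ∂(κ.prod (μI.prod ν)))) := by
        gcongr
        exact (integral_tvDist_le_add hm2.aestronglyMeasurable hm3.aestronglyMeasurable).trans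
          (add_le_add_left hcommon _)
    _ = _ := by ring

/-- Lower-level suboptimality bound:
`|J(π**) − J(π_θ)| ≤ λ_L·φ + λ_L·E_{s∼κ, i∼Π, g∼ν}[D_TV(π_{D,i}(·|s,g), π_θ(·|s,g))]`
with `λ_L = (2 R_max / (1−γ)^2) · C`. -/
theorem lower_level_suboptimality_bound
    {S T G I : Type*} [MeasurableSpace S] [MeasurableSpace T] [MeasurableSpace G]
    [MeasurableSpace I]
    (κ d : Measure S) (ν : Measure G) (μI : Measure I)
    [IsProbabilityMeasure κ] [IsProbabilityMeasure d] [IsProbabilityMeasure ν]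
    [IsProbabilityMeasure μI]
    (πD : I → S → G → Measure T) (πStarStar πθ : S → G → Measure T)
    (hπD : ∀ i s g, IsProbabilityMeasure (πD i s g))
    (hπStarStar : ∀ s g, IsProbabilityMeasure (πStarStar s g))
    (hπθ : ∀ s g, IsProbabilityMeasure (πθ s g))
    (J : (S → G → Measure T) → ℝ)
    (Rmax γ φ C : ℝ)
    (hR : 0 ≤ Rmax) (hγ0 : 0 < γ) (hγ1 : γ < 1)
    (hφ : 0 ≤ φ) (hC : 0 ≤ C)
    -- (i) performance-difference bound
    (hperf : |J πStarStar - J πθ| ≤ (2 * Rmax / (1 - γ) ^ 2) *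
      ∫ p : S × G, tvDist (πStarStar p.1 p.2) (πθ p.1 p.2) ∂(d.prod ν))
    -- (ii) absolute continuity of `d` w.r.t. `κ` with κ-essentially bounded density
    (hac : d ≪ κ)
    (hbound : ∀ᵐ s ∂κ, d.rnDeriv κ s ≤ ENNReal.ofReal C)
    -- (iii) `π**` is `φ`-common in `Π`
    (hcommon : ∫ p : S × I × G,
        tvDist (πStarStar p.1 p.2.2) (πD p.2.1 p.1 p.2.2) ∂(κ.prod (μI.prod ν)) ≤ φ)
    -- (iv) measurability of the total-variation maps
    (hm1 : Measurable fun p : S × G => tvDist (πStarStar p.1 p.2) (πθ p.1 p.2))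
    (hm2 : Measurable fun p : S × I × G =>
      tvDist (πStarStar p.1 p.2.2) (πD p.2.1 p.1 p.2.2))
    (hm3 : Measurable fun p : S × I × G => tvDist (πD p.2.1 p.1 p.2.2) (πθ p.1 p.2.2)) :
    |J πStarStar - J πθ| ≤ (2 * Rmax / (1 - γ) ^ 2) * C * φ +
      (2 * Rmax / (1 - γ) ^ 2) * C *
        ∫ p : S × I × G,
          tvDist (πD p.2.1 p.1 p.2.2) (πθ p.1 p.2.2) ∂(κ.prod (μI.prod ν)) :=
  lower_level_suboptimality_bound_general κ d ν μI πD πStarStar πθ hπD hπStarStar hπθ J Rmax γ φ C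
    hR hC hperf hac hbound hcommon hm1 hm2 hm3
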